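/- arXiv:1702.07262 — 5 statements merged into one kernel-verified Lean document; each statement's English description precedes it below -/
import Mathlib

section
/- Let $K$ be a field, $P = K[x_1,\dots,x_n]$, $I$ a zero-dimensional ideal, and $f \in P$. If the minimal polynomial $\mu_{f,I}(z)$ of $f$ modulo $I$ is squarefree and $\deg(\mu_{f,I}) = \dim_K(P/I)$, then $I$ is a radical ideal. -/
theorem stmt4 {K : Type*} [Field K] {n : ℕ} (I : Ideal (MvPolynomial (Fin n) K))
    [FiniteDimensional K (MvPolynomial (Fin n) K ⧸ I)] (f : MvPolynomial (Fin n) K)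
    (hsq : Squarefree (minpoly K (Ideal.Quotient.mk I f)))
    (hdeg : (minpoly K (Ideal.Quotient.mk I f)).natDegree =
      Module.finrank K (MvPolynomial (Fin n) K ⧸ I)) :
    I.IsRadical := by
  rw [Ideal.isRadical_iff_quotient_reduced]
  set A := MvPolynomial (Fin n) K ⧸ I
  set α : A := Ideal.Quotient.mk I f
  have hα : IsIntegral K α := IsIntegral.of_finite K α
  -- powers of α span A
  have hli : LinearIndependent K fun i : Fin (minpoly K α).natDegree => α ^ (i : ℕ) :=
    linearIndependent_pow α
  have hspan : Submodule.span K (Set.range fun i : Fin (minpoly K α).natDegree =>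
      α ^ (i : ℕ)) = ⊤ :=
    hli.span_eq_top_of_card_eq_finrank' (by simpa using hdeg)
  constructor
  intro a ha
  obtain ⟨k, hk⟩ := ha
  -- a is a polynomial in α
  have hmem : a ∈ Submodule.span K (Set.range fun i : Fin (minpoly K α).natDegree =>
      α ^ (i : ℕ)) := hspan ▸ Submodule.mem_top
  have hrange : a ∈ (Polynomial.aeval (R := K) α).range := by
    refine Submodule.span_induction (fun x hx => ?_) ?_ (fun x y _ _ hx hy => ?_)
      (fun c x _ hx => ?_) hmem
    · obtain ⟨i, rfl⟩ := hx
      exact ⟨Polynomial.X ^ (i : ℕ), by simp⟩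
    · exact ⟨0, by simp⟩
    · obtain ⟨p, rfl⟩ := hx; obtain ⟨q, rfl⟩ := hy
      exact ⟨p + q, by simp⟩
    · obtain ⟨p, rfl⟩ := hx
      exact ⟨Polynomial.C c * p, by show (Polynomial.aeval α) _ = _; rw [map_mul, Polynomial.aeval_C, ← Algebra.smul_def]; rfl⟩
  obtain ⟨p, rfl⟩ := hrange
  rcases Nat.eq_zero_or_pos k with rfl | hk0
  · rw [pow_zero] at hk
    haveI : Subsingleton A := subsingleton_of_zero_eq_one hk.symm
    exact Subsingleton.elim _ _
  have hdvd : minpoly K α ∣ p ^ k := by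
    apply minpoly.dvd
    rw [map_pow]
    exact hk
  have hdvd' : minpoly K α ∣ p := (hsq.dvd_pow_iff_dvd hk0.ne').mp hdvd
  obtain ⟨q, rfl⟩ := hdvd'
  show (Polynomial.aeval α) (minpoly K α * q) = 0
  rw [map_mul, minpoly.aeval, zero_mul]
end

section
/- Let $K$ be a field, $P = K[x_1,\dots,x_n]$, $I$ a zero-dimensional primary ideal of $P$, and $f \in P$. Then the minimal polynomial of $f$ modulo $I$ is a power of an irreducible polynomial in $K[z]$. -/
theorem stmt5 {K : Type*} [Field K] {n : ℕ} (I : Ideal (MvPolynomial (Fin n) K))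
    [FiniteDimensional K (MvPolynomial (Fin n) K ⧸ I)] (hI : I.IsPrimary)
    (f : MvPolynomial (Fin n) K) :
    ∃ (p : Polynomial K) (k : ℕ), Irreducible p ∧ 0 < k ∧
      minpoly K (Ideal.Quotient.mk I f) = p ^ k := by
  classical
  set x := Ideal.Quotient.mk I f with hx
  haveI : Nontrivial (MvPolynomial (Fin n) K ⧸ I) := Ideal.Quotient.nontrivial_iff.mpr hI.1
  have hint : IsIntegral K x := IsIntegral.of_finite K x
  set μ := minpoly K x with hμ
  have hmonic : μ.Monic := minpoly.monic hint
  have hμ0 : μ ≠ 0 := hmonic.ne_zero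
  have hdeg : 0 < μ.natDegree := minpoly.natDegree_pos hint
  have hnu : ¬ IsUnit μ := by
    intro h
    have := Polynomial.natDegree_eq_zero_of_isUnit h
    omega
  -- irreducible monic factor
  obtain ⟨p0, hp0irr, hp0dvd⟩ := WfDvdMonoid.exists_irreducible_factor hnu hμ0
  set p := normalize p0 with hp
  have hpmon : p.Monic := Polynomial.monic_normalize hp0irr.ne_zero
  have hpirr : Irreducible p := (normalize_associated p0).symm.irreducible hp0irr
  have hpdvd : p ∣ μ := (normalize_associated p0).dvd.trans hp0dvd
  obtain ⟨k, q, hpq, hfac⟩ := WfDvdMonoid.max_power_factor hμ0 hpirr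
  have hq0 : q ≠ 0 := by rintro rfl; simp at hfac; exact hμ0 hfac
  have hk : 0 < k := by
    rcases Nat.eq_zero_or_pos k with rfl | h
    · exfalso; apply hpq; simpa [hfac, pow_zero] using hpdvd
    · exact h
  -- q is a unit
  have hqunit : IsUnit q := by
    by_contra hqnu
    have hqdeg : 0 < q.natDegree := by
      rcases Nat.eq_zero_or_pos q.natDegree with h | h
      · refine absurd ?_ hqnu
        rw [Polynomial.eq_C_of_natDegree_eq_zero h]
        refine Polynomial.isUnit_C.2 (isUnit_iff_ne_zero.2 ?_)
        intro hc
        exact hq0 (by rw [Polynomial.eq_C_of_natDegree_eq_zero h, hc, map_zero])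
      · exact h
    -- aeval x (p^k) ≠ 0
    have hane : Polynomial.aeval x (p ^ k) ≠ 0 := by
      intro ha
      have hdvd : μ ∣ p ^ k := minpoly.dvd K x ha
      have hle : μ.natDegree ≤ (p ^ k).natDegree :=
        Polynomial.natDegree_le_of_dvd hdvd (pow_ne_zero _ hpirr.ne_zero)
      have : μ.natDegree = (p ^ k).natDegree + q.natDegree := by
        rw [hfac, Polynomial.natDegree_mul (pow_ne_zero _ hpirr.ne_zero) hq0]
      omega
    -- primary argument
    obtain ⟨A, hA⟩ := Ideal.Quotient.mk_surjective (Polynomial.aeval x (p ^ k))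
    obtain ⟨B, hB⟩ := Ideal.Quotient.mk_surjective (Polynomial.aeval x q)
    have hab : Polynomial.aeval x (p ^ k) * Polynomial.aeval x q = 0 := by
      rw [← map_mul, ← hfac]; exact minpoly.aeval K x
    have hAB : A * B ∈ I := by
      rw [← Ideal.Quotient.eq_zero_iff_mem, map_mul, hA, hB]; exact hab
    rcases (Ideal.isPrimary_iff.mp hI).2 hAB with h | h
    · exact hane (by rw [← hA, Ideal.Quotient.eq_zero_iff_mem]; exact h)
    · obtain ⟨m, hm⟩ := h
      have hqm : Polynomial.aeval x (q ^ m) = 0 := by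
        rw [map_pow, ← hB, ← map_pow, Ideal.Quotient.eq_zero_iff_mem]
        exact hm
      have : p ∣ q ^ m := hpdvd.trans (minpoly.dvd K x hqm)
      exact hpq (hpirr.prime.dvd_of_dvd_pow this)
  -- conclude μ = p ^ k
  obtain ⟨c, hcu, hc⟩ := Polynomial.isUnit_iff.1 hqunit
  have hc1 : c = 1 := by
    have := hmonic
    rw [Polynomial.Monic, hfac, ← hc, Polynomial.leadingCoeff_mul,
      Polynomial.leadingCoeff_pow, hpmon.leadingCoeff, one_pow, one_mul,
      Polynomial.leadingCoeff_C] at this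
    exact this
  refine ⟨p, k, hpirr, hk, ?_⟩
  rw [hfac, ← hc, hc1, map_one, mul_one]
end

section
/- Let $K$ be a perfect field, $P = K[x_1,\dots,x_n]$, $I$ a zero-dimensional ideal, and for each $i$ let $f_i \in K[x_i]$ generate $I \cap K[x_i]$, with $g_i$ the squarefree part of $f_i$. Then $\sqrt{I} = I + \langle g_1, \dots, g_n \rangle$. -/
/-!
Let `J = I + ⟨g₁(x₁), …, gₙ(xₙ)⟩`. Each `gᵢ` generates the radical of `⟨fᵢ⟩ = I ∩ K[xᵢ]`, so
`J ⊆ √I`, and it remains to see that `J` is radical. Finite-dimensionality of `P ⧸ I` makes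
`fᵢ ≠ 0`, so over a perfect field the squarefree `gᵢ` is separable and `gᵢ'(xᵢ)` is a unit
modulo `J`; applying a derivation to `gᵢ(xᵢ) = 0` then kills `dxᵢ`. Hence `Ω[(P ⧸ J)⁄K] = 0`:
the finitely generated `K`-algebra `P ⧸ J` is unramified over a field, hence reduced.
-/

open Polynomial

theorem Derivation.map_eq_zero_of_separable_of_aeval_eq_zero {R A M : Type*} [CommRing R]
    [CommRing A] [Algebra R A] [AddCommGroup M] [Module A M] [Module R M] [IsScalarTower R A M]
    (D : Derivation R A M) {x : A} {p : R[X]} (hp : p.Separable) (hx : aeval x p = 0) :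
    D x = 0 := by
  obtain ⟨a, b, hab⟩ := hp
  have hunit : aeval x b * aeval x (derivative p) = 1 := by
    simpa [hx] using congrArg (aeval x) hab
  calc D x = (aeval x b * aeval x (derivative p)) • D x := by rw [hunit, one_smul]
    _ = aeval x b • D (aeval x p) := by rw [mul_smul, D.map_aeval]
    _ = 0 := by rw [hx, D.map_zero, smul_zero]

theorem Algebra.FormallyUnramified.of_adjoin_eq_top_of_separable {R A : Type*} [CommRing R]
    [CommRing A] [Algebra R A] {s : Set A} (hs : Algebra.adjoin R s = ⊤)
    (h : ∀ x ∈ s, ∃ p : R[X], p.Separable ∧ aeval x p = 0) :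
    Algebra.FormallyUnramified R A := by
  have hD : KaehlerDifferential.D R A = 0 := by
    refine Derivation.ext_of_adjoin_eq_top s hs fun x hx => ?_
    obtain ⟨p, hp, hpx⟩ := h x hx
    exact (KaehlerDifferential.D R A).map_eq_zero_of_separable_of_aeval_eq_zero hp hpx
  refine ⟨(subsingleton_iff_forall_eq 0).mpr fun ω => ?_⟩
  have hω : ω ∈ Submodule.span A (Set.range (KaehlerDifferential.D R A)) := by
    rw [KaehlerDifferential.span_range_derivation]; trivial
  rwa [hD, Derivation.coe_zero, Set.range_zero, Submodule.span_zero_singleton,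
    Submodule.mem_bot] at hω

theorem MvPolynomial.isRadical_of_aeval_X_mem {σ K : Type*} [Finite σ] [Field K]
    {J : Ideal (MvPolynomial σ K)} {g : σ → K[X]} (hg : ∀ i, (g i).Separable)
    (hJ : ∀ i, Polynomial.aeval (X i) (g i) ∈ J) : J.IsRadical := by
  have hadjoin : Algebra.adjoin K (Set.range fun i => Ideal.Quotient.mk J (X i)) = ⊤ := by
    rw [Algebra.adjoin_range_eq_range_aeval, AlgHom.range_eq_top]
    convert Ideal.Quotient.mkₐ_surjective K J
    exact MvPolynomial.algHom_ext fun i => by simp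
  have hroots : ∀ x ∈ Set.range fun i => Ideal.Quotient.mk J (X i),
      ∃ p : K[X], p.Separable ∧ Polynomial.aeval x p = 0 := by
    rintro _ ⟨i, rfl⟩
    refine ⟨g i, hg i, ?_⟩
    rw [← Ideal.Quotient.mkₐ_eq_mk K, aeval_algHom_apply, Ideal.Quotient.mkₐ_eq_mk,
      Ideal.Quotient.eq_zero_iff_mem]
    exact hJ i
  have := Algebra.FormallyUnramified.of_adjoin_eq_top_of_separable hadjoin hroots
  rw [Ideal.isRadical_iff_quotient_reduced]
  exact Algebra.FormallyUnramified.isReduced_of_field K _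

theorem Polynomial.separable_of_span_eq_radical {K : Type*} [Field K] [PerfectField K]
    {f g : K[X]} (hf : f ≠ 0) (hg : Ideal.span {g} = (Ideal.span {f}).radical) :
    g.Separable := by
  have hg0 : g ≠ 0 := by
    rintro rfl
    have hfg := Ideal.le_radical (Ideal.mem_span_singleton_self f)
    rw [← hg, Ideal.mem_span_singleton, zero_dvd_iff] at hfg
    exact hf hfg
  rw [PerfectField.separable_iff_squarefree]
  exact (isRadical_iff_span_singleton.mpr (hg ▸ Ideal.radical_isRadical _)).squarefree hg0

theorem Ideal.comap_aeval_ne_bot {K R : Type*} [Field K] [CommRing R] [Algebra K R]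
    (I : Ideal R) [FiniteDimensional K (R ⧸ I)] (r : R) :
    I.comap (aeval r : K[X] →ₐ[K] R).toRingHom ≠ ⊥ := by
  have hint : IsIntegral K (Ideal.Quotient.mk I r) := .of_finite K _
  refine fun h => minpoly.ne_zero hint ?_
  have hmem : minpoly K (Ideal.Quotient.mk I r) ∈ I.comap (aeval r : K[X] →ₐ[K] R).toRingHom := by
    rw [Ideal.mem_comap, ← Ideal.Quotient.eq_zero_iff_mem, AlgHom.toRingHom_eq_coe,
      RingHom.coe_coe, ← Ideal.Quotient.mkₐ_eq_mk K, ← aeval_algHom_apply, minpoly.aeval]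
  rwa [h, Ideal.mem_bot] at hmem

theorem stmt9 {K : Type*} [Field K] [PerfectField K] {n : ℕ}
    (I : Ideal (MvPolynomial (Fin n) K))
    [FiniteDimensional K (MvPolynomial (Fin n) K ⧸ I)]
    (f g : Fin n → Polynomial K)
    (hf : ∀ i, Ideal.comap (Polynomial.aeval (MvPolynomial.X i :
        MvPolynomial (Fin n) K)).toRingHom I = Ideal.span {f i})
    (hg : ∀ i, Ideal.span {g i} = (Ideal.span {f i}).radical) :
    I.radical = I ⊔ Ideal.span
      (Set.range fun i => Polynomial.aeval (MvPolynomial.X i : MvPolynomial (Fin n) K) (g i)) := by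
  have hf0 : ∀ i, f i ≠ 0 := fun i hfi =>
    Ideal.comap_aeval_ne_bot I (MvPolynomial.X i) (by rw [hf i, hfi, Ideal.span_singleton_eq_bot])
  have hrad : (I ⊔ Ideal.span (Set.range fun i => aeval (MvPolynomial.X i) (g i))).IsRadical :=
    MvPolynomial.isRadical_of_aeval_X_mem (fun i => separable_of_span_eq_radical (hf0 i) (hg i))
      fun i => Ideal.mem_sup_right (Ideal.subset_span ⟨i, rfl⟩)
  refine le_antisymm (hrad.radical ▸ Ideal.radical_mono le_sup_left) ?_
  refine sup_le Ideal.le_radical (Ideal.span_le.mpr ?_)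
  rintro _ ⟨i, rfl⟩
  change g i ∈ I.radical.comap (aeval (MvPolynomial.X i)).toRingHom
  rw [Ideal.comap_radical, hf i, ← hg i]
  exact Ideal.mem_span_singleton_self _
end

section
/- Let $I$ be a zero-dimensional ideal of $P = K[x_1,\dots,x_n]$, $f \in P$, and let $\mu = \mu_{f,I}(z)$ be the minimal polynomial of $f$ modulo $I$. If $\mu = \prod_{j=1}^s \mu_j^{d_j}$ is the factorization of $\mu$ into pairwise distinct monic irreducible factors, then $I = \bigcap_{j=1}^s \big( I + \langle \mu_j(f)^{d_j} \rangle \big)$. -/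
open Polynomial

theorem Polynomial.isCoprime_of_monic_of_irreducible_of_ne {K : Type*} [Field K] {p q : K[X]}
    (hp : p.Monic) (hq : q.Monic) (hp_irr : Irreducible p) (hq_irr : Irreducible q)
    (hne : p ≠ q) : IsCoprime p q :=
  (hp_irr.isCoprime_or_dvd q).resolve_right fun hdvd =>
    hne (eq_of_monic_of_associated hp hq (hp_irr.associated_of_dvd hq_irr hdvd))

theorem Polynomial.aeval_minpoly_quotient_mk_mem (K : Type*) {A : Type*} [Field K] [CommRing A]
    [Algebra K A] (I : Ideal A) (f : A) :
    aeval f (minpoly K (Ideal.Quotient.mk I f)) ∈ I := by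
  rw [← Ideal.Quotient.eq_zero_iff_mem, ← Ideal.Quotient.mkₐ_eq_mk K, ← aeval_algHom_apply]
  exact minpoly.aeval K _

theorem Ideal.sup_span_singleton_eq_comap {R : Type*} [CommRing R] (I : Ideal R) (a : R) :
    I ⊔ span {a} = comap (Quotient.mk I) (span {Quotient.mk I a}) := by
  rw [← Set.image_singleton, ← map_span, comap_map_of_surjective _ Quotient.mk_surjective,
    ← RingHom.ker_eq_comap_bot, mk_ker, sup_comm]

/-- Modulo `I` the ideals `span {g i}` are pairwise comaximal with product zero, so their
intersection is zero. -/
theorem Ideal.eq_iInf_sup_span_singleton {R ι : Type*} [CommRing R] [Fintype ι] (I : Ideal R)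
    (g : ι → R) (hg : Pairwise fun i j => IsCoprime (g i) (g j)) (hprod : ∏ i, g i ∈ I) :
    I = ⨅ i, I ⊔ span {g i} := by
  have hg' : ∀ i j, i ≠ j → IsCoprime (Quotient.mk I (g i)) (Quotient.mk I (g j)) :=
    fun i j hij => (hg hij).map _
  simp_rw [sup_span_singleton_eq_comap, ← comap_iInf, iInf_span_singleton hg', ← map_prod,
    Quotient.eq_zero_iff_mem.mpr hprod, span_singleton_eq_bot.mpr rfl,
    ← RingHom.ker_eq_comap_bot, mk_ker]

theorem stmt16_general {K : Type*} [Field K] {n : ℕ} (I : Ideal (MvPolynomial (Fin n) K))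
    (f : MvPolynomial (Fin n) K)
    (s : ℕ) (μ : Fin s → Polynomial K) (d : Fin s → ℕ)
    (hmonic : ∀ j, (μ j).Monic) (hirr : ∀ j, Irreducible (μ j))
    (hinj : Function.Injective μ)
    (hfac : minpoly K (Ideal.Quotient.mk I f) = ∏ j, μ j ^ d j) :
    I = ⨅ j, (I ⊔ Ideal.span {(Polynomial.aeval f (μ j)) ^ d j}) := by
  refine Ideal.eq_iInf_sup_span_singleton I _ (fun i j hij => ?_) ?_
  · have hcop := isCoprime_of_monic_of_irreducible_of_ne (hmonic i) (hmonic j) (hirr i) (hirr j)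
      (hinj.ne hij)
    have hcop_pow := (hcop.pow (m := d i) (n := d j)).map (aeval f).toRingHom
    rwa [map_pow, map_pow] at hcop_pow
  · simpa only [hfac, map_prod, map_pow] using aeval_minpoly_quotient_mk_mem K I f

theorem stmt16 {K : Type*} [Field K] {n : ℕ} (I : Ideal (MvPolynomial (Fin n) K))
    [FiniteDimensional K (MvPolynomial (Fin n) K ⧸ I)] (f : MvPolynomial (Fin n) K)
    (s : ℕ) (μ : Fin s → Polynomial K) (d : Fin s → ℕ)
    (hmonic : ∀ j, (μ j).Monic) (hirr : ∀ j, Irreducible (μ j))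
    (hinj : Function.Injective μ) (hd : ∀ j, 0 < d j)
    (hfac : minpoly K (Ideal.Quotient.mk I f) = ∏ j, μ j ^ d j) :
    I = ⨅ j, (I ⊔ Ideal.span {(Polynomial.aeval f (μ j)) ^ d j}) :=
  stmt16_general I f s μ d hmonic hirr hinj hfac
end

section
/- Let $K$ be a field, $P = K[x_1,\dots,x_n]$, $I$ a zero-dimensional ideal with $d = \dim_K(P/I)$, and $f \in P$. Let $A$ be the matrix of the multiplication-by-$\bar f$ endomorphism of $P/I$ with respect to a $K$-basis whose first element is $\bar 1$. Then the powers $A^0, A^1, \dots, A^i$ are linearly dependent over $K$ if and only if their first columns are linearly dependent over $K$. -/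
/-! The matrices `A ^ j` are the images of `f̄ ^ j` under the injective algebra map
`Algebra.leftMulMatrix B`, and since the first basis vector is `1̄`, the first column of
`leftMulMatrix B x` is the coordinate vector of `x`. Both families are therefore linearly
independent exactly when the powers `f̄ ^ j` are. -/

namespace Algebra

variable {R S ι κ : Type*} [CommSemiring R] [Semiring S] [Algebra R S] [Fintype ι] [DecidableEq ι]
  (b : Module.Basis ι R S)

theorem leftMulMatrix_apply_of_basis_eq_one {i₀ : ι} (hb : b i₀ = 1) (x : S) (r : ι) :
    leftMulMatrix b x r i₀ = b.repr x r := by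
  rw [leftMulMatrix_eq_repr_mul, hb, mul_one]

theorem linearIndependent_leftMulMatrix_iff (v : κ → S) :
    LinearIndependent R (fun j => leftMulMatrix b (v j)) ↔ LinearIndependent R v :=
  (leftMulMatrix b).toLinearMap.linearIndependent_iff_of_injOn
    (leftMulMatrix_injective b).injOn

theorem linearIndependent_leftMulMatrix_col_iff {i₀ : ι} (hb : b i₀ = 1) (v : κ → S) :
    LinearIndependent R (fun j r => leftMulMatrix b (v j) r i₀) ↔ LinearIndependent R v := by
  have hcol : (fun j r => leftMulMatrix b (v j) r i₀) = b.equivFun ∘ v := by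
    funext j r
    exact leftMulMatrix_apply_of_basis_eq_one b hb (v j) r
  rw [hcol]
  exact b.equivFun.toLinearMap.linearIndependent_iff_of_injOn b.equivFun.injective.injOn

end Algebra

theorem stmt19_general {K : Type*} [Field K] {n : ℕ} (I : Ideal (MvPolynomial (Fin n) K))
    (f : MvPolynomial (Fin n) K)
    (d : ℕ) (hd : 0 < d) (B : Module.Basis (Fin d) K (MvPolynomial (Fin n) K ⧸ I))
    (hB : B ⟨0, hd⟩ = 1)
    (A : Matrix (Fin d) (Fin d) K)
    (hA : A = LinearMap.toMatrix B B (LinearMap.mulLeft K (Ideal.Quotient.mk I f)))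
    (i : ℕ) :
    ¬ LinearIndependent K (fun j : Fin (i + 1) => A ^ (j : ℕ)) ↔
      ¬ LinearIndependent K (fun j : Fin (i + 1) => fun r : Fin d => (A ^ (j : ℕ)) r ⟨0, hd⟩) := by
  have hpow (j : ℕ) : A ^ j = Algebra.leftMulMatrix B (Ideal.Quotient.mk I f ^ j) := by
    rw [map_pow, hA, Algebra.leftMulMatrix_apply]
    rfl
  simp only [hpow, Algebra.linearIndependent_leftMulMatrix_iff,
    Algebra.linearIndependent_leftMulMatrix_col_iff B hB]

theorem stmt19 {K : Type*} [Field K] {n : ℕ} (I : Ideal (MvPolynomial (Fin n) K))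
    [FiniteDimensional K (MvPolynomial (Fin n) K ⧸ I)] (f : MvPolynomial (Fin n) K)
    (d : ℕ) (hd : 0 < d) (B : Module.Basis (Fin d) K (MvPolynomial (Fin n) K ⧸ I))
    (hB : B ⟨0, hd⟩ = 1)
    (A : Matrix (Fin d) (Fin d) K)
    (hA : A = LinearMap.toMatrix B B (LinearMap.mulLeft K (Ideal.Quotient.mk I f)))
    (i : ℕ) :
    ¬ LinearIndependent K (fun j : Fin (i + 1) => A ^ (j : ℕ)) ↔
      ¬ LinearIndependent K (fun j : Fin (i + 1) => fun r : Fin d => (A ^ (j : ℕ)) r ⟨0, hd⟩) :=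
  stmt19_general I f d hd B hB A hA i
end
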